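/- arXiv:math/0205206 — 2 statements merged into one kernel-verified Lean document; each statement's English description precedes it below -/
import Mathlib

section
/- For all n ≥ 1, the number of permutations of {1,...,n} avoiding the patterns 132, 2341, 3241, and 123 equals F_{n+2} - 1, where F_k denotes the k-th Fibonacci number (F_0 = 0, F_1 = 1). -/
/-- A function `π : Fin n → Fin n` contains the pattern `p : Fin k → ℕ` if there is a
strictly increasing choice of indices whose images under `π` have the same pairwise
order relations as the entries of `p`. -/
def Contains {n k : ℕ} (π : Fin n → Fin n) (p : Fin k → ℕ) : Prop :=
  ∃ f : Fin k → Fin n, StrictMono f ∧ ∀ i j, p i < p j ↔ π (f i) < π (f j)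

/-- `π` avoids the pattern `p`. -/
def Avoids {n k : ℕ} (π : Fin n → Fin n) (p : Fin k → ℕ) : Prop := ¬ Contains π p

/-- The set of permutations of `Fin n` avoiding the patterns 132, 2341 and 3241,
i.e. the 132-avoiding two-stack sortable permutations. -/
def TSS132 (n : ℕ) : Set (Fin n → Fin n) :=
  {π | Function.Bijective π ∧ Avoids π ![1,3,2] ∧ Avoids π ![2,3,4,1] ∧ Avoids π ![3,2,4,1]}

/-- The Pell numbers. -/
def pell : ℕ → ℕ
  | 0 => 0
  | 1 => 1
  | n+2 => 2 * pell (n+1) + pell n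

/-!
Avoiding 123 and 132 means that no entry is exceeded by two later entries. So for `n ≥ 3` a
permutation in the class starts with its maximum `n`, or with `n - 1, n`, or with `n - 1, n - 2`.
In the last case avoiding 3241 forces `n` to be the last entry, and the entries before it must
then decrease: the permutation is `n - 1, n - 2, …, 1, n`. Deleting the prefix `n`, resp.
`n - 1, n`, is a bijection onto the class one, resp. two, sizes down, because no occurrence of
the four patterns can use such a prefix entry. Hence the class sizes satisfy
`s (n + 3) = s (n + 2) + s (n + 1) + 1`, and with `s 1 = 1`, `s 2 = 2` this gives
`s n = F (n + 2) - 1`.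
-/

open Function

section Patterns

variable {α β : Type*} [LinearOrder α] [LinearOrder β]

def HasPattern {n k : ℕ} (π : Fin n → α) (p : Fin k → ℕ) : Prop :=
  ∃ f : Fin k → Fin n, StrictMono f ∧ ∀ i j, p i < p j ↔ π (f i) < π (f j)

theorem hasPattern_comp_iff {n k : ℕ} {e : α → β} (he : StrictMono e) (π : Fin n → α)
    (p : Fin k → ℕ) : HasPattern (e ∘ π) p ↔ HasPattern π p := by
  simp only [HasPattern, comp_apply, he.lt_iff_lt]

theorem hasPattern_cons_iff {n k : ℕ} {x : α} {π : Fin n → α} {p : Fin (k + 3) → ℕ}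
    (hp : p 0 < p 2) (hx : ∀ i j, i < j → π j < x) :
    HasPattern (Fin.cons x π : Fin (n + 1) → α) p ↔ HasPattern π p := by
  constructor
  · rintro ⟨f, hf, hfp⟩
    have hf0 : f 0 ≠ 0 := by
      intro h0
      have h01 : f 0 < f 1 := hf (by simp)
      have h12 : f 1 < f 2 := hf (by simp [Fin.lt_def, Nat.mod_eq_of_lt])
      obtain ⟨i, hi⟩ := Fin.exists_succ_eq.mpr (h0 ▸ h01).ne'
      obtain ⟨j, hj⟩ := Fin.exists_succ_eq.mpr (h0 ▸ h01.trans h12).ne'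
      have hxj := (hfp 0 2).mp hp
      rw [h0, ← hj, Fin.cons_zero, Fin.cons_succ] at hxj
      exact (hx i j (by rwa [← Fin.succ_lt_succ_iff, hi, hj])).not_gt hxj
    have hne : ∀ i, f i ≠ 0 := fun i =>
      (Fin.pos_iff_ne_zero.mpr hf0 |>.trans_le (hf.monotone (Fin.zero_le i))).ne'
    have hcons : ∀ i, (Fin.cons x π : Fin (n + 1) → α) (f i) = π ((f i).pred (hne i)) := by
      intro i
      conv_lhs => rw [← Fin.succ_pred (f i) (hne i)]
      exact Fin.cons_succ _ _ _
    refine ⟨fun i => (f i).pred (hne i), fun a b h => Fin.pred_lt_pred_iff.mpr (hf h),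
      fun i j => ?_⟩
    rw [hfp, hcons, hcons]
  · rintro ⟨f, hf, hfp⟩
    exact ⟨Fin.succ ∘ f, Fin.strictMono_succ.comp hf, by simpa using hfp⟩

end Patterns

theorem avoids_of_length_lt {n k : ℕ} (π : Fin n → Fin n) (p : Fin k → ℕ) (h : n < k) :
    Avoids π p :=
  fun ⟨f, hf, _⟩ => h.not_ge (by simpa using Fintype.card_le_of_injective f hf.injective)

theorem avoids_of_forall_lt_imp_eq_last {n k : ℕ} {π : Fin (n + 1) → Fin (n + 1)}
    (hπ : ∀ a b, a < b → π a < π b → b = Fin.last n) {p : Fin k → ℕ}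
    (hp : ∃ i j l, i < j ∧ j < l ∧ p i < p j) : Avoids π p := by
  obtain ⟨i, j, l, hij, hjl, hp⟩ := hp
  rintro ⟨f, hf, hfp⟩
  have hj := hπ _ _ (hf hij) ((hfp i j).mp hp)
  exact (Fin.le_last (f l)).not_gt (hj ▸ hf hjl)

theorem contains_123 {n : ℕ} {π : Fin n → Fin n} {a b c : Fin n} (hab : a < b) (hbc : b < c)
    (h₁ : π a < π b) (h₂ : π b < π c) : Contains π ![1, 2, 3] := by
  refine ⟨![a, b, c], ?_, fun i j => ?_⟩
  · simp [Fin.strictMono_iff_lt_succ, Fin.forall_fin_succ, *]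
  · fin_cases i <;> fin_cases j <;> simp <;> order

theorem contains_132 {n : ℕ} {π : Fin n → Fin n} {a b c : Fin n} (hab : a < b) (hbc : b < c)
    (h₁ : π a < π c) (h₂ : π c < π b) : Contains π ![1, 3, 2] := by
  refine ⟨![a, b, c], ?_, fun i j => ?_⟩
  · simp [Fin.strictMono_iff_lt_succ, Fin.forall_fin_succ, *]
  · fin_cases i <;> fin_cases j <;> simp <;> order

theorem contains_3241 {n : ℕ} {π : Fin n → Fin n} {a b c d : Fin n} (hab : a < b)
    (hbc : b < c) (hcd : c < d) (h₁ : π d < π b) (h₂ : π b < π a) (h₃ : π a < π c) :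
    Contains π ![3, 2, 4, 1] := by
  refine ⟨![a, b, c, d], ?_, fun i j => ?_⟩
  · simp [Fin.strictMono_iff_lt_succ, Fin.forall_fin_succ, *]
  · fin_cases i <;> fin_cases j <;> simp <;> order

def TSS132Av123 (n : ℕ) : Set (Fin n → Fin n) := {π ∈ TSS132 n | Avoids π ![1,2,3]}

theorem mem_TSS132Av123_iff_of_hasPattern_iff {m n : ℕ} {π : Fin n → Fin n}
    {σ : Fin m → Fin m} (hinj : Injective π ↔ Injective σ)
    (hpat : ∀ k (p : Fin (k + 3) → ℕ), p 0 < p 2 → (HasPattern π p ↔ HasPattern σ p)) :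
    π ∈ TSS132Av123 n ↔ σ ∈ TSS132Av123 m := by
  have hcon : ∀ k (p : Fin (k + 3) → ℕ), p 0 < p 2 → (Contains π p ↔ Contains σ p) := hpat
  simp only [TSS132Av123, TSS132, Set.mem_ofPred_eq, Avoids, ← Finite.injective_iff_bijective,
    hinj, hcon 0 ![1, 3, 2] (by decide), hcon 1 ![2, 3, 4, 1] (by decide),
    hcon 1 ![3, 2, 4, 1] (by decide), hcon 0 ![1, 2, 3] (by decide)]

section Prepend

variable {m : ℕ}

def prependMax (σ : Fin m → Fin m) : Fin (m + 1) → Fin (m + 1) :=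
  Fin.cons (Fin.last m) (Fin.castSucc ∘ σ)

def prependSubmaxMax (σ : Fin m → Fin m) : Fin (m + 2) → Fin (m + 2) :=
  Fin.cons (Fin.last m).castSucc (Fin.cons (Fin.last (m + 1)) (Fin.castSucc ∘ Fin.castSucc ∘ σ))

theorem prependMax_injective : Injective (prependMax : (Fin m → Fin m) → _) :=
  (Fin.cons_right_injective _).comp (Fin.castSucc_injective _).comp_left

theorem prependSubmaxMax_injective : Injective (prependSubmaxMax : (Fin m → Fin m) → _) :=
  (Fin.cons_right_injective _).comp <| (Fin.cons_right_injective _).comp <|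
    ((Fin.castSucc_injective _).comp (Fin.castSucc_injective _)).comp_left

theorem injective_prependMax_iff {σ : Fin m → Fin m} :
    Injective (prependMax σ) ↔ Injective σ := by
  simp [prependMax, Fin.cons_injective_iff, (Fin.castSucc_injective _).of_comp_iff]

theorem injective_prependSubmaxMax_iff {σ : Fin m → Fin m} :
    Injective (prependSubmaxMax σ) ↔ Injective σ := by
  simp [prependSubmaxMax, Fin.cons_injective_iff, (Fin.castSucc_injective _).of_comp_iff]

theorem prependMax_mem_iff {σ : Fin m → Fin m} :
    prependMax σ ∈ TSS132Av123 (m + 1) ↔ σ ∈ TSS132Av123 m :=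
  mem_TSS132Av123_iff_of_hasPattern_iff injective_prependMax_iff fun _ _ hp => by
    rw [prependMax, hasPattern_cons_iff (π := Fin.castSucc ∘ σ) hp
      (fun _ _ _ => Fin.castSucc_lt_last _), hasPattern_comp_iff Fin.strictMono_castSucc]

theorem prependSubmaxMax_mem_iff {σ : Fin m → Fin m} :
    prependSubmaxMax σ ∈ TSS132Av123 (m + 2) ↔ σ ∈ TSS132Av123 m :=
  mem_TSS132Av123_iff_of_hasPattern_iff injective_prependSubmaxMax_iff fun _ _ hp => by
    rw [prependSubmaxMax, hasPattern_cons_iff hp ?_,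
      hasPattern_cons_iff (π := Fin.castSucc ∘ Fin.castSucc ∘ σ) hp
        (fun _ _ _ => Fin.castSucc_lt_last _),
      hasPattern_comp_iff Fin.strictMono_castSucc, hasPattern_comp_iff Fin.strictMono_castSucc]
    intro i j hij
    obtain ⟨j, rfl⟩ := Fin.exists_succ_eq.mpr (Fin.pos_iff_ne_zero.mp (hij.trans_le' i.zero_le))
    simp

theorem exists_prependMax_eq {π : Fin (m + 1) → Fin (m + 1)} (hπ : Injective π)
    (h0 : π 0 = Fin.last m) : ∃ σ, prependMax σ = π := by
  refine ⟨fun i => (π i.succ).castPred fun h => i.succ_ne_zero (hπ (h.trans h0.symm)), ?_⟩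
  funext i
  induction i using Fin.cases <;> simp [prependMax, h0]

theorem exists_prependSubmaxMax_eq {π : Fin (m + 2) → Fin (m + 2)} (hπ : Injective π)
    (h0 : π 0 = (Fin.last m).castSucc) (h1 : π 1 = Fin.last (m + 1)) :
    ∃ σ, prependSubmaxMax σ = π := by
  have hne1 : ∀ i : Fin m, π i.succ.succ ≠ Fin.last (m + 1) := fun i h => by
    simpa [Fin.ext_iff] using hπ (h.trans h1.symm)
  have hne0 : ∀ i : Fin m, (π i.succ.succ).castPred (hne1 i) ≠ Fin.last m := fun i h =>
    i.succ.succ_ne_zero (hπ (by rw [h0, ← h, Fin.castSucc_castPred]))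
  refine ⟨fun i => ((π i.succ.succ).castPred (hne1 i)).castPred (hne0 i), ?_⟩
  funext i
  induction i using Fin.cases with
  | zero => simp [prependSubmaxMax, h0]
  | succ i => induction i using Fin.cases <;> simp [prependSubmaxMax, ← h1]

end Prepend

section DescLast

variable {n : ℕ}

def descLast (n : ℕ) : Fin (n + 1) → Fin (n + 1) :=
  Fin.snoc (α := fun _ => Fin (n + 1)) (Fin.castSucc ∘ Fin.rev) (Fin.last n)

theorem descLast_injective : Injective (descLast n) := by
  simp [descLast, Fin.snoc_injective_iff, (Fin.castSucc_injective _).comp Fin.rev_injective]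

theorem eq_last_of_descLast_lt {a b : Fin (n + 1)} (hab : a < b)
    (h : descLast n a < descLast n b) : b = Fin.last n := by
  induction b using Fin.lastCases with
  | last => rfl
  | cast b =>
    obtain ⟨a, rfl⟩ := Fin.exists_castSucc_eq.mpr (hab.trans (Fin.castSucc_lt_last b)).ne
    simp only [descLast, Fin.snoc_castSucc, comp_apply, Fin.castSucc_lt_castSucc_iff,
      Fin.rev_lt_rev] at h hab
    exact (h.asymm hab).elim

theorem descLast_mem : descLast n ∈ TSS132Av123 (n + 1) := by
  refine ⟨⟨descLast_injective.bijective_of_finite, ?_, ?_, ?_⟩, ?_⟩ <;>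
    exact avoids_of_forall_lt_imp_eq_last (fun _ _ => eq_last_of_descLast_lt) (by decide)

end DescLast

namespace TSS132Av123

variable {n : ℕ}

theorem injective {π : Fin n → Fin n} (hπ : π ∈ TSS132Av123 n) : Injective π := hπ.1.1.1

theorem surjective {π : Fin n → Fin n} (hπ : π ∈ TSS132Av123 n) : Surjective π := hπ.1.1.2

theorem apply_lt_of_ascent {π : Fin n → Fin n} (hπ : π ∈ TSS132Av123 n) {a b c : Fin n}
    (hab : a < b) (hbc : b < c) (hb : π a < π b) : π c < π a := by
  rcases lt_trichotomy (π c) (π a) with h | h | h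
  · exact h
  · exact absurd (injective hπ h) (hab.trans hbc).ne'
  · rcases lt_trichotomy (π b) (π c) with h' | h' | h'
    · exact (hπ.2 (contains_123 hab hbc hb h')).elim
    · exact absurd (injective hπ h') hbc.ne
    · exact (hπ.1.2.1 (contains_132 hab hbc h h')).elim

theorem eq_of_apply_lt_of_apply_lt {π : Fin n → Fin n} (hπ : π ∈ TSS132Av123 n)
    {a u v : Fin n} (hu : π a < u) (hv : π a < v) (hbefore : ∀ i < a, π i ≠ u ∧ π i ≠ v) :
    u = v := by
  obtain ⟨b, rfl⟩ := surjective hπ u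
  obtain ⟨c, rfl⟩ := surjective hπ v
  have after : ∀ d, π a < π d → (∀ i < a, π i ≠ π d) → a < d := fun d hd hne =>
    lt_of_not_ge fun hda => hda.lt_or_eq.elim (fun h => hne d h rfl)
      (fun h => hd.ne (congrArg π h.symm))
  have hab := after b hu fun i hi => (hbefore i hi).1
  have hac := after c hv fun i hi => (hbefore i hi).2
  rcases lt_trichotomy b c with h | rfl | h
  · exact absurd hv (apply_lt_of_ascent hπ hab h hu).not_gt
  · rfl
  · exact absurd hu (apply_lt_of_ascent hπ hac h hv).not_gt

theorem apply_zero_eq_of_ne_last {π : Fin (n + 2) → Fin (n + 2)}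
    (hπ : π ∈ TSS132Av123 (n + 2)) (h0 : π 0 ≠ Fin.last (n + 1)) :
    π 0 = (Fin.last n).castSucc := by
  by_contra h
  have hlt : π 0 < (Fin.last n).castSucc := by
    have := (π 0).isLt
    simp only [ne_eq, Fin.ext_iff, Fin.lt_def, Fin.val_last, Fin.val_castSucc] at h h0 ⊢
    omega
  exact (Fin.castSucc_lt_last _).ne' <| eq_of_apply_lt_of_apply_lt hπ
    (hlt.trans (Fin.castSucc_lt_last _)) hlt fun i hi => absurd hi (Fin.not_lt_zero i)

theorem apply_one_eq_of_ne_last {π : Fin (n + 3) → Fin (n + 3)}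
    (hπ : π ∈ TSS132Av123 (n + 3)) (h0 : π 0 = (Fin.last (n + 1)).castSucc)
    (h1 : π 1 ≠ Fin.last (n + 2)) : π 1 = (Fin.last n).castSucc.castSucc := by
  by_contra h
  have hne : π 1 ≠ π 0 := fun h => absurd (injective hπ h) (by simp)
  have hlt : π 1 < (Fin.last n).castSucc.castSucc := by
    have := (π 1).isLt
    rw [h0] at hne
    simp only [ne_eq, Fin.ext_iff, Fin.lt_def, Fin.val_last, Fin.val_castSucc] at h h1 hne ⊢
    omega
  have hbefore : ∀ i < 1, π i ≠ Fin.last (n + 2) ∧ π i ≠ (Fin.last n).castSucc.castSucc := by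
    intro i hi
    rw [show i = 0 from Fin.ext (Nat.lt_one_iff.mp hi), h0]
    simp [Fin.ext_iff]
  have := eq_of_apply_lt_of_apply_lt hπ (hlt.trans (Fin.castSucc_lt_last _)) hlt hbefore
  simp [Fin.ext_iff] at this
  omega

theorem apply_last_eq_last {π : Fin (n + 3) → Fin (n + 3)} (hπ : π ∈ TSS132Av123 (n + 3))
    (h0 : π 0 = (Fin.last (n + 1)).castSucc) (h1 : π 1 = (Fin.last n).castSucc.castSucc) :
    π (Fin.last (n + 2)) = Fin.last (n + 2) := by
  obtain ⟨a, ha⟩ := surjective hπ (Fin.last (n + 2))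
  by_contra h
  have ha_last : a ≠ Fin.last (n + 2) := by rintro rfl; exact h ha
  have h1a : 1 < a := by
    have ha0 : a ≠ 0 := by rintro rfl; rw [h0] at ha; simp [Fin.ext_iff] at ha
    have ha1 : a ≠ 1 := by rintro rfl; rw [h1] at ha; simp [Fin.ext_iff] at ha
    simp only [ne_eq, Fin.ext_iff, Fin.lt_def, Fin.val_zero, Fin.val_one] at ha0 ha1 ⊢
    omega
  have hlast : π (Fin.last (n + 2)) < π 1 := by
    have hne : ∀ i, i ≠ Fin.last (n + 2) → π (Fin.last (n + 2)) ≠ π i :=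
      fun i hi h => hi (injective hπ h).symm
    have h0' := hne 0 (by simp [Fin.ext_iff])
    have h1' := hne 1 (by simp [Fin.ext_iff])
    have ha' := hne a ha_last
    have := (π (Fin.last (n + 2))).isLt
    rw [h0] at h0'
    rw [h1] at h1' ⊢
    rw [ha] at ha'
    simp only [ne_eq, Fin.ext_iff, Fin.lt_def, Fin.val_last, Fin.val_castSucc] at h0' h1' ha' ⊢
    omega
  refine hπ.1.2.2.2 (contains_3241 (a := 0) (by simp) h1a (Fin.lt_last_iff_ne_last.mpr ha_last)
    hlast ?_ ?_)
  · rw [h0, h1]; simp [Fin.lt_def]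
  · rw [h0, ha]; exact Fin.castSucc_lt_last _

theorem eq_descLast {π : Fin (n + 1) → Fin (n + 1)} (hπ : π ∈ TSS132Av123 (n + 1))
    (hlast : π (Fin.last n) = Fin.last n) : π = descLast n := by
  have hne : ∀ i : Fin n, π i.castSucc ≠ Fin.last n := fun i h =>
    (Fin.castSucc_lt_last i).ne (injective hπ (h.trans hlast.symm))
  have hanti : ∀ i j : Fin n, i < j → π j.castSucc < π i.castSucc := by
    intro i j hij
    rcases lt_trichotomy (π j.castSucc) (π i.castSucc) with h | h | h
    · exact h
    · exact absurd (Fin.castSucc_injective _ (injective hπ h)) hij.ne'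
    · have := apply_lt_of_ascent hπ (Fin.castSucc_lt_castSucc_iff.mpr hij)
        (Fin.castSucc_lt_last j) h
      rw [hlast] at this
      exact absurd this (Fin.le_last _).not_gt
  -- read backwards, the first `n` entries form a strictly increasing self-map of `Fin n`
  set g : Fin n → Fin n := fun i => (π i.castSucc).castPred (hne i)
  have hg : g ∘ Fin.rev = id := StrictMono.eq_id fun i j hij =>
    (Fin.castPred_lt_castPred_iff (hi := hne _) (hj := hne _)).mpr
      (hanti _ _ (Fin.rev_lt_rev.mpr hij))
  funext i
  induction i using Fin.lastCases with
  | last => simp [descLast, hlast]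
  | cast i =>
    have := congrFun hg i.rev
    simp only [comp_apply, Fin.rev_rev, id_eq, g] at this
    simp [descLast, ← this]

theorem eq_union (n : ℕ) : TSS132Av123 (n + 3) = prependMax '' TSS132Av123 (n + 2) ∪
    prependSubmaxMax '' TSS132Av123 (n + 1) ∪ {descLast (n + 2)} := by
  ext π
  constructor
  · intro hπ
    by_cases h0 : π 0 = Fin.last (n + 2)
    · obtain ⟨σ, rfl⟩ := exists_prependMax_eq (injective hπ) h0
      exact .inl (.inl ⟨σ, prependMax_mem_iff.mp hπ, rfl⟩)
    have h0' := apply_zero_eq_of_ne_last hπ h0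
    by_cases h1 : π 1 = Fin.last (n + 2)
    · obtain ⟨σ, rfl⟩ := exists_prependSubmaxMax_eq (injective hπ) h0' h1
      exact .inl (.inr ⟨σ, prependSubmaxMax_mem_iff.mp hπ, rfl⟩)
    · exact .inr (eq_descLast hπ (apply_last_eq_last hπ h0' (apply_one_eq_of_ne_last hπ h0' h1)))
  · rintro ((⟨σ, hσ, rfl⟩ | ⟨σ, hσ, rfl⟩) | rfl)
    exacts [prependMax_mem_iff.mpr hσ, prependSubmaxMax_mem_iff.mpr hσ, descLast_mem]

theorem ncard_add_three (n : ℕ) : (TSS132Av123 (n + 3)).ncard =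
    (TSS132Av123 (n + 2)).ncard + (TSS132Av123 (n + 1)).ncard + 1 := by
  have hAB : Disjoint (prependMax '' TSS132Av123 (n + 2))
      (prependSubmaxMax '' TSS132Av123 (n + 1)) := by
    rw [Set.disjoint_left]
    rintro _ ⟨σ, -, rfl⟩ ⟨τ, -, h⟩
    simpa [prependMax, prependSubmaxMax, Fin.ext_iff] using congrFun h 0
  have hC : descLast (n + 2) ∉
      prependMax '' TSS132Av123 (n + 2) ∪ prependSubmaxMax '' TSS132Av123 (n + 1) := by
    rintro (⟨σ, -, h⟩ | ⟨τ, -, h⟩)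
    · simpa [prependMax, descLast, Fin.ext_iff] using congrFun h 0
    · have h1 : prependSubmaxMax τ 1 = descLast (n + 2) (Fin.castSucc 1) := congrFun h 1
      rw [descLast, Fin.snoc_castSucc] at h1
      simp [prependSubmaxMax, Fin.ext_iff] at h1
      omega
  rw [eq_union, Set.ncard_union_eq (Set.disjoint_singleton_right.mpr hC),
    Set.ncard_union_eq hAB, Set.ncard_image_of_injective _ prependMax_injective,
    Set.ncard_image_of_injective _ prependSubmaxMax_injective, Set.ncard_singleton]

theorem eq_setOf_bijective (hn : n < 3) : TSS132Av123 n = {π | Bijective π} := by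
  ext π
  simp only [TSS132Av123, TSS132, Set.mem_ofPred_eq, avoids_of_length_lt π _ hn,
    avoids_of_length_lt π _ (hn.trans (by norm_num : 3 < 4)), and_true]

theorem ncard_one : (TSS132Av123 1).ncard = 1 := by
  rw [eq_setOf_bijective (by norm_num), Set.ncard_eq_toFinset_card']
  decide

theorem ncard_two : (TSS132Av123 2).ncard = 2 := by
  rw [eq_setOf_bijective (by norm_num), Set.ncard_eq_toFinset_card']
  decide

theorem ncard_add_one : ∀ n : ℕ, (TSS132Av123 (n + 1)).ncard + 1 = Nat.fib (n + 3)
  | 0 => by rw [ncard_one]; rfl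
  | 1 => by rw [ncard_two]; rfl
  | n + 2 => by
    have h₀ := ncard_add_one n
    have h₁ : (TSS132Av123 (n + 2)).ncard + 1 = Nat.fib (n + 4) := ncard_add_one (n + 1)
    have hfib : Nat.fib (n + 5) = Nat.fib (n + 3) + Nat.fib (n + 4) := Nat.fib_add_two
    show (TSS132Av123 (n + 3)).ncard + 1 = Nat.fib (n + 5)
    rw [ncard_add_three]
    omega

end TSS132Av123

theorem stmt_6 (n : ℕ) (hn : 1 ≤ n) :
    (Nat.card ↥{π ∈ TSS132 n | Avoids π ![1,2,3]} : ℤ) = Nat.fib (n+2) - 1 := by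
  obtain ⟨m, rfl⟩ := Nat.exists_eq_add_of_le' hn
  rw [show {π ∈ TSS132 (m + 1) | Avoids π ![1,2,3]} = TSS132Av123 (m + 1) from rfl,
    Nat.card_coe_set_eq, ← TSS132Av123.ncard_add_one]
  push_cast
  ring
end

section
/- For all n ≥ 1, the number of permutations of {1,...,n} avoiding the patterns 132, 2341, 3241, and 45123 equals 3·2^{n-1} - F_{n+3} + 1, where F_k is the k-th Fibonacci number. -/
open Function Nat

/-! The maximum of a permutation in this class stands first, second or last: anywhere else it
would complete a `132`, `2341` or `3241` with the first two and the last entries. Removing it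
from the first or last position leaves a permutation of the same class. In second position,
`132`-avoidance puts the two largest values in front, and then `45123`-avoidance says exactly
that the rest avoids `123`. So `s (n + 3) = 2 s (n + 2) + t (n + 1)`, where `t` counts the
permutations avoiding `123`, `132` and `3241`. The same analysis gives
`t (m + 3) = t (m + 2) + t (m + 1) + 1`, the `1` being the decreasing word followed by its
maximum, so `t (m + 1) = F (m + 3) - 1`, and the formula for `s` follows. -/

abbrev Pattern := Σ k, Fin k → ℕ

def Av (P : List Pattern) (n : ℕ) : Set (Fin n → Fin n) :=
  {π | Bijective π ∧ ∀ p ∈ P, Avoids π p.2}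

def pats132_2341_3241_45123 : List Pattern :=
  [⟨3, ![1,3,2]⟩, ⟨4, ![2,3,4,1]⟩, ⟨4, ![3,2,4,1]⟩, ⟨5, ![4,5,1,2,3]⟩]

def pats123_132_3241 : List Pattern :=
  [⟨3, ![1,2,3]⟩, ⟨3, ![1,3,2]⟩, ⟨4, ![3,2,4,1]⟩]

theorem sep_TSS132_eq_Av (n : ℕ) :
    {π ∈ TSS132 n | Avoids π ![4,5,1,2,3]} = Av pats132_2341_3241_45123 n := by
  ext π
  simp [TSS132, Av, pats132_2341_3241_45123, and_assoc]

section Patterns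

variable {n k : ℕ} {π : Fin n → Fin n} {p : Fin k → ℕ}

theorem mem_Av_pats132_2341_3241_45123 :
    π ∈ Av pats132_2341_3241_45123 n ↔ Bijective π ∧ Avoids π ![1,3,2] ∧
      Avoids π ![2,3,4,1] ∧ Avoids π ![3,2,4,1] ∧ Avoids π ![4,5,1,2,3] := by
  simp [Av, pats132_2341_3241_45123]

theorem mem_Av_pats123_132_3241 :
    π ∈ Av pats123_132_3241 n ↔
      Bijective π ∧ Avoids π ![1,2,3] ∧ Avoids π ![1,3,2] ∧ Avoids π ![3,2,4,1] := by
  simp [Av, pats123_132_3241]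

theorem avoids_of_lt (h : n < k) : Avoids π p := by
  rintro ⟨f, hf, -⟩
  have := Fintype.card_le_of_injective f hf.injective
  simp only [Fintype.card_fin] at this
  omega

theorem avoids_of_antitone (hπ : Antitone π) (hp : ∃ a b, a < b ∧ p a < p b) : Avoids π p := by
  obtain ⟨a, b, hab, hpab⟩ := hp
  rintro ⟨f, hf, hfp⟩
  exact ((hfp a b).1 hpab).not_ge (hπ (hf hab).le)

theorem contains_123_iff :
    Contains π ![1,2,3] ↔ ∃ a b c, a < b ∧ b < c ∧ π a < π b ∧ π b < π c := by
  constructor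
  · rintro ⟨f, hf, h⟩
    exact ⟨f 0, f 1, f 2, hf (by decide), hf (by decide), (h 0 1).1 (by decide),
      (h 1 2).1 (by decide)⟩
  · rintro ⟨a, b, c, hab, hbc, h₁, h₂⟩
    refine ⟨![a, b, c], by simp [hab, hbc], fun i j => ?_⟩
    fin_cases i <;> fin_cases j <;> simp <;> order

theorem contains_132_iff :
    Contains π ![1,3,2] ↔ ∃ a b c, a < b ∧ b < c ∧ π a < π c ∧ π c < π b := by
  constructor
  · rintro ⟨f, hf, h⟩
    exact ⟨f 0, f 1, f 2, hf (by decide), hf (by decide), (h 0 2).1 (by decide),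
      (h 2 1).1 (by decide)⟩
  · rintro ⟨a, b, c, hab, hbc, h₁, h₂⟩
    refine ⟨![a, b, c], by simp [hab, hbc], fun i j => ?_⟩
    fin_cases i <;> fin_cases j <;> simp <;> order

theorem contains_2341_iff :
    Contains π ![2,3,4,1] ↔ ∃ a b c d, a < b ∧ b < c ∧ c < d ∧
      π d < π a ∧ π a < π b ∧ π b < π c := by
  constructor
  · rintro ⟨f, hf, h⟩
    exact ⟨f 0, f 1, f 2, f 3, hf (by decide), hf (by decide), hf (by decide),
      (h 3 0).1 (by decide), (h 0 1).1 (by decide), (h 1 2).1 (by decide)⟩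
  · rintro ⟨a, b, c, d, hab, hbc, hcd, h₁, h₂, h₃⟩
    refine ⟨![a, b, c, d], by simp [hab, hbc, hcd], fun i j => ?_⟩
    fin_cases i <;> fin_cases j <;> simp <;> order

theorem contains_3241_iff :
    Contains π ![3,2,4,1] ↔ ∃ a b c d, a < b ∧ b < c ∧ c < d ∧
      π d < π b ∧ π b < π a ∧ π a < π c := by
  constructor
  · rintro ⟨f, hf, h⟩
    exact ⟨f 0, f 1, f 2, f 3, hf (by decide), hf (by decide), hf (by decide),
      (h 3 1).1 (by decide), (h 1 0).1 (by decide), (h 0 2).1 (by decide)⟩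
  · rintro ⟨a, b, c, d, hab, hbc, hcd, h₁, h₂, h₃⟩
    refine ⟨![a, b, c, d], by simp [hab, hbc, hcd], fun i j => ?_⟩
    fin_cases i <;> fin_cases j <;> simp <;> order

theorem contains_45123_iff :
    Contains π ![4,5,1,2,3] ↔ ∃ a b c d e, a < b ∧ b < c ∧ c < d ∧ d < e ∧
      π c < π d ∧ π d < π e ∧ π e < π a ∧ π a < π b := by
  constructor
  · rintro ⟨f, hf, h⟩
    exact ⟨f 0, f 1, f 2, f 3, f 4, hf (by decide), hf (by decide), hf (by decide),
      hf (by decide), (h 2 3).1 (by decide), (h 3 4).1 (by decide), (h 4 0).1 (by decide),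
      (h 0 1).1 (by decide)⟩
  · rintro ⟨a, b, c, d, e, hab, hbc, hcd, hde, h₁, h₂, h₃, h₄⟩
    refine ⟨![a, b, c, d, e], by simp [hab, hbc, hcd, hde], fun i j => ?_⟩
    fin_cases i <;> fin_cases j <;> simp <;> order

end Patterns

theorem Fin.val_le_val_of_strictMono {k m : ℕ} {f : Fin k → Fin m} (hf : StrictMono f)
    (j : Fin k) : (j : ℕ) ≤ f j := by
  obtain ⟨j, hj⟩ := j
  induction j with
  | zero => exact Nat.zero_le _
  | succ j ih =>
    exact (ih (by omega)).trans_lt (Fin.lt_def.1 (hf (Fin.mk_lt_mk.2 (Nat.lt_succ_self j))))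

theorem eq_last_of_forall_lt {n : ℕ} {τ : Fin (n + 1) → Fin (n + 1)} {i : Fin (n + 1)}
    (hτ : Surjective τ) (h : ∀ j ≠ i, τ j < τ i) : τ i = Fin.last n := by
  obtain ⟨j, hj⟩ := hτ (Fin.last n)
  by_cases hji : j = i
  · exact hji ▸ hj
  · exact absurd (hj ▸ h j hji) (Fin.le_last _).not_gt

theorem eq_rev_of_antitone {n : ℕ} {σ : Fin n → Fin n} (hσ : Bijective σ) (h : Antitone σ) :
    σ = Fin.rev := by
  have hid := (Fin.rev_strictAnti.comp (h.strictAnti_of_injective hσ.1)).eq_id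
  exact funext fun j => Fin.rev_eq_iff.1 (congrFun hid j)

section InsertMax

variable {n k : ℕ} {i : Fin (n + 1)} {σ : Fin n → Fin n} {p : Fin k → ℕ}

def insertMax (i : Fin (n + 1)) (σ : Fin n → Fin n) : Fin (n + 1) → Fin (n + 1) :=
  Fin.insertNth i (Fin.last n) (Fin.castSucc ∘ σ)

@[simp]
theorem insertMax_apply_same : insertMax i σ i = Fin.last n :=
  Fin.insertNth_apply_same ..

@[simp]
theorem insertMax_apply_succAbove (j : Fin n) : insertMax i σ (i.succAbove j) = (σ j).castSucc :=
  Fin.insertNth_apply_succAbove ..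

@[simp]
theorem insertMax_last_apply_castSucc (j : Fin n) :
    insertMax (Fin.last n) σ j.castSucc = (σ j).castSucc := by
  simpa using insertMax_apply_succAbove (i := Fin.last n) (σ := σ) j

@[simp]
theorem insertMax_zero_apply_succ (j : Fin n) : insertMax 0 σ j.succ = (σ j).castSucc := by
  simpa using insertMax_apply_succAbove (i := 0) (σ := σ) j

@[simp]
theorem insertMax_one_apply_zero {τ : Fin (n + 1) → Fin (n + 1)} :
    insertMax 1 τ 0 = (τ 0).castSucc := by
  simpa using insertMax_apply_succAbove (i := 1) (σ := τ) 0

@[simp]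
theorem insertMax_one_apply_succ_succ {τ : Fin (n + 1) → Fin (n + 1)} (j : Fin n) :
    insertMax 1 τ j.succ.succ = (τ j.succ).castSucc := by
  simpa using insertMax_apply_succAbove (i := 1) (σ := τ) j.succ

theorem insertMax_injective (i : Fin (n + 1)) : Injective (insertMax (n := n) i) :=
  fun σ τ h => funext fun j => Fin.castSucc_injective _ <| by
    simpa using congrFun h (i.succAbove j)

theorem bijective_insertMax (hσ : Bijective σ) (i : Fin (n + 1)) :
    Bijective (insertMax i σ) := by
  have hmax : ∀ x, insertMax i σ x = Fin.last n → x = i := fun x hx => by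
    rcases Fin.eq_self_or_eq_succAbove i x with rfl | ⟨x, rfl⟩
    · rfl
    · simp at hx
  refine Finite.injective_iff_bijective.1 fun x y hxy => ?_
  rcases Fin.eq_self_or_eq_succAbove i x with rfl | ⟨x, rfl⟩
  · exact (hmax y (hxy.symm.trans insertMax_apply_same)).symm
  rcases Fin.eq_self_or_eq_succAbove i y with rfl | ⟨y, rfl⟩
  · exact hmax _ (hxy.trans insertMax_apply_same)
  · simp only [insertMax_apply_succAbove, Fin.castSucc_inj] at hxy
    rw [hσ.1 hxy]

theorem exists_insertMax_eq {π : Fin (n + 1) → Fin (n + 1)} (hπ : Bijective π)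
    (hi : π i = Fin.last n) : ∃ σ, Bijective σ ∧ insertMax i σ = π := by
  have hne : ∀ j, π (i.succAbove j) ≠ Fin.last n := fun j h =>
    i.succAbove_ne j (hπ.1 (h.trans hi.symm))
  refine ⟨fun j => (π (i.succAbove j)).castPred (hne j),
    Finite.injective_iff_bijective.1 fun x y hxy => ?_, ?_⟩
  · exact (Fin.strictMono_succAbove i).injective (hπ.1 (Fin.castPred_inj.1 hxy))
  · rw [insertMax, Fin.insertNth_eq_iff]
    exact ⟨hi.symm, funext fun j => by simp [Fin.removeNth]⟩

theorem Avoids.of_insertMax (h : Avoids (insertMax i σ) p) : Avoids σ p := by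
  rintro ⟨f, hf, hfp⟩
  exact h ⟨i.succAbove ∘ f, (Fin.strictMono_succAbove i).comp hf, fun a b => by simp [hfp]⟩

/-- Only a maximal entry of `p` can sit on the new maximum, and an occurrence of `p` missing it
is an occurrence in `σ`. -/
theorem Avoids.insertMax_of_forall
    (hp : ∀ f : Fin k → Fin (n + 1), StrictMono f → ∀ j, f j = i → ∃ j', p j < p j')
    (h : Avoids σ p) : Avoids (insertMax i σ) p := by
  rintro ⟨f, hf, hfp⟩
  have hne : ∀ j, f j ≠ i := fun j hj => by
    obtain ⟨j', hj'⟩ := hp f hf j hj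
    have := (hfp j j').1 hj'
    rw [hj, insertMax_apply_same] at this
    exact (Fin.le_last _).not_gt this
  choose g hg using fun j => Fin.exists_succAbove_eq (hne j)
  refine h ⟨g, fun a b hab => ?_, fun a b => ?_⟩
  · rw [← (Fin.strictMono_succAbove i).lt_iff_lt, hg, hg]
    exact hf hab
  · rw [hfp, ← hg, ← hg]
    simp

theorem Avoids.insertMax_of_le (hp : ∀ j : Fin k, (j : ℕ) ≤ i → ∃ j', p j < p j')
    (h : Avoids σ p) : Avoids (insertMax i σ) p :=
  h.insertMax_of_forall fun _ hf j hj => hp j (hj ▸ Fin.val_le_val_of_strictMono hf j)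

theorem Avoids.insertMax_last (hp : ∀ j : Fin k, (j : ℕ) + 1 = k → ∃ j', p j < p j')
    (h : Avoids σ p) : Avoids (insertMax (Fin.last n) σ) p :=
  h.insertMax_of_forall fun f hf j hj => hp j <| by
    by_contra hjk
    have := hf (Fin.mk_lt_mk.2 (Nat.lt_succ_self j) : j < ⟨j + 1, by omega⟩)
    rw [hj] at this
    exact (Fin.le_last _).not_gt this

theorem image_insertMax_Av {P : List Pattern} (i : Fin (n + 1))
    (hP : ∀ p ∈ P, ∀ σ : Fin n → Fin n, Avoids σ p.2 → Avoids (insertMax i σ) p.2) :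
    insertMax i '' Av P n = {π ∈ Av P (n + 1) | π i = Fin.last n} := by
  ext π
  constructor
  · rintro ⟨σ, ⟨hσ, hav⟩, rfl⟩
    exact ⟨⟨bijective_insertMax hσ i, fun p hp => hP p hp σ (hav p hp)⟩, insertMax_apply_same⟩
  · rintro ⟨⟨hπ, hav⟩, hi⟩
    obtain ⟨σ, hσ, rfl⟩ := exists_insertMax_eq hπ hi
    exact ⟨σ, ⟨hσ, fun p hp => (hav p hp).of_insertMax⟩, rfl⟩

theorem image_insertMax_zero_Av {P : List Pattern}
    (hP : ∀ p ∈ P, ∀ j : Fin p.1, (j : ℕ) = 0 → ∃ j', p.2 j < p.2 j') :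
    insertMax 0 '' Av P n = {π ∈ Av P (n + 1) | π 0 = Fin.last n} :=
  image_insertMax_Av 0 fun p hp _ h =>
    Avoids.insertMax_of_le (fun j hj => hP p hp j (by simpa using hj)) h

theorem image_insertMax_last_Av {P : List Pattern}
    (hP : ∀ p ∈ P, ∀ j : Fin p.1, (j : ℕ) + 1 = p.1 → ∃ j', p.2 j < p.2 j') :
    insertMax (Fin.last n) '' Av P n = {π ∈ Av P (n + 1) | π (Fin.last n) = Fin.last n} :=
  image_insertMax_Av _ fun p hp _ h => Avoids.insertMax_last (hP p hp) h

theorem avoids_123_insertMax_last_iff :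
    Avoids (insertMax (Fin.last n) σ) ![1,2,3] ↔ Antitone σ := by
  rw [Avoids, contains_123_iff]
  constructor
  · intro h a b hab
    by_contra! hlt
    refine h ⟨a.castSucc, b.castSucc, Fin.last n, ?_, Fin.castSucc_lt_last b, ?_, ?_⟩
    · exact Fin.castSucc_lt_castSucc_iff.2 (lt_of_le_of_ne hab (by rintro rfl; simp at hlt))
    · simpa using hlt
    · simp [Fin.castSucc_lt_last]
  · rintro h ⟨a, b, c, hab, hbc, h₁, -⟩
    obtain ⟨a, rfl⟩ := Fin.exists_castSucc_eq.2 (hab.trans (hbc.trans_le (Fin.le_last _))).ne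
    obtain ⟨b, rfl⟩ := Fin.exists_castSucc_eq.2 (hbc.trans_le (Fin.le_last _)).ne
    simp only [insertMax_last_apply_castSucc, Fin.castSucc_lt_castSucc_iff] at hab h₁
    exact (h hab.le).not_gt h₁

end InsertMax

section PrependTwo

variable {m k : ℕ} {σ : Fin m → Fin m} {p : Fin k → ℕ}

/-- The skew sum `12 ⊖ σ`, i.e. the word `m, m + 1, σ 0, …, σ (m - 1)`. -/
def prependTwo (σ : Fin m → Fin m) : Fin (m + 2) → Fin (m + 2) :=
  insertMax 1 (insertMax 0 σ)

@[simp]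
theorem prependTwo_apply_zero : prependTwo σ 0 = (Fin.last m).castSucc := by
  simp [prependTwo]

@[simp]
theorem prependTwo_apply_one : prependTwo σ 1 = Fin.last (m + 1) :=
  insertMax_apply_same

@[simp]
theorem prependTwo_apply_succ_succ (j : Fin m) :
    prependTwo σ j.succ.succ = (σ j).castSucc.castSucc := by
  simp [prependTwo]

theorem prependTwo_injective : Injective (prependTwo (m := m)) :=
  (insertMax_injective 1).comp (insertMax_injective 0)

theorem bijective_prependTwo (hσ : Bijective σ) : Bijective (prependTwo σ) :=
  bijective_insertMax (bijective_insertMax hσ 0) 1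

theorem Fin.exists_succ_succ_eq {x : Fin (m + 2)} (hx : 2 ≤ (x : ℕ)) :
    ∃ j : Fin m, j.succ.succ = x :=
  ⟨⟨x - 2, by omega⟩, Fin.ext (by simp; omega)⟩

theorem prependTwo_lt_apply_zero_iff {x : Fin (m + 2)} :
    prependTwo σ x < prependTwo σ 0 ↔ 2 ≤ (x : ℕ) := by
  constructor
  · intro h
    by_contra hx
    obtain rfl | rfl : x = 0 ∨ x = 1 := by
      simp only [Fin.ext_iff, Fin.val_zero, Fin.val_one]
      omega
    · exact lt_irrefl _ h
    · exact (Fin.le_last _).not_gt h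
  · intro hx
    obtain ⟨j, rfl⟩ := Fin.exists_succ_succ_eq hx
    simp [Fin.castSucc_lt_last]

theorem Avoids.prependTwo_of_le (hp : ∀ j : Fin k, (j : ℕ) ≤ 1 → ∃ j', p j < p j')
    (h : Avoids σ p) : Avoids (prependTwo σ) p :=
  (h.insertMax_of_le fun j hj => hp j (by simp at hj; omega)).insertMax_of_le
    fun j hj => hp j (by simpa using hj)

theorem Avoids.of_prependTwo (h : Avoids (prependTwo σ) p) : Avoids σ p :=
  h.of_insertMax.of_insertMax

theorem Avoids.prependTwo_132 (h : Avoids σ ![1,3,2]) : Avoids (prependTwo σ) ![1,3,2] := by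
  rw [Avoids, contains_132_iff]
  rintro ⟨a, b, c, hab, hbc, hac, hcb⟩
  have ha : 2 ≤ (a : ℕ) := prependTwo_lt_apply_zero_iff.1
    (hac.trans (prependTwo_lt_apply_zero_iff.2 (by omega)))
  obtain ⟨a, rfl⟩ := Fin.exists_succ_succ_eq ha
  obtain ⟨b, rfl⟩ := Fin.exists_succ_succ_eq (show 2 ≤ (b : ℕ) by omega)
  obtain ⟨c, rfl⟩ := Fin.exists_succ_succ_eq (show 2 ≤ (c : ℕ) by omega)
  simp only [prependTwo_apply_succ_succ, Fin.succ_lt_succ_iff, Fin.castSucc_lt_castSucc_iff]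
    at hab hbc hac hcb
  exact h (contains_132_iff.2 ⟨a, b, c, hab, hbc, hac, hcb⟩)

theorem Avoids.prependTwo_2341 (h : Avoids σ ![1,2,3]) : Avoids (prependTwo σ) ![2,3,4,1] := by
  rw [Avoids, contains_2341_iff]
  rintro ⟨a, b, c, d, hab, hbc, hcd, -, hab', hbc'⟩
  have ha : 2 ≤ (a : ℕ) := prependTwo_lt_apply_zero_iff.1
    ((hab'.trans hbc').trans (prependTwo_lt_apply_zero_iff.2 (by omega)))
  obtain ⟨a, rfl⟩ := Fin.exists_succ_succ_eq ha
  obtain ⟨b, rfl⟩ := Fin.exists_succ_succ_eq (show 2 ≤ (b : ℕ) by omega)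
  obtain ⟨c, rfl⟩ := Fin.exists_succ_succ_eq (show 2 ≤ (c : ℕ) by omega)
  simp only [prependTwo_apply_succ_succ, Fin.succ_lt_succ_iff, Fin.castSucc_lt_castSucc_iff]
    at hab hbc hab' hbc'
  exact h (contains_123_iff.2 ⟨a, b, c, hab, hbc, hab', hbc'⟩)

theorem avoids_45123_prependTwo_iff :
    Avoids (prependTwo σ) ![4,5,1,2,3] ↔ Avoids σ ![1,2,3] := by
  rw [Avoids, Avoids, contains_45123_iff, contains_123_iff, not_iff_not]
  constructor
  · rintro ⟨a, b, c, d, e, hab, hbc, hcd, hde, hcd', hde', -, -⟩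
    obtain ⟨c, rfl⟩ := Fin.exists_succ_succ_eq (show 2 ≤ (c : ℕ) by omega)
    obtain ⟨d, rfl⟩ := Fin.exists_succ_succ_eq (show 2 ≤ (d : ℕ) by omega)
    obtain ⟨e, rfl⟩ := Fin.exists_succ_succ_eq (show 2 ≤ (e : ℕ) by omega)
    simp only [prependTwo_apply_succ_succ, Fin.succ_lt_succ_iff, Fin.castSucc_lt_castSucc_iff]
      at hcd hde hcd' hde'
    exact ⟨c, d, e, hcd, hde, hcd', hde'⟩
  · rintro ⟨a, b, c, hab, hbc, hab', hbc'⟩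
    refine ⟨0, 1, a.succ.succ, b.succ.succ, c.succ.succ, ?_⟩
    simp [hab, hbc, hab', hbc', Fin.castSucc_lt_last, Fin.one_lt_succ_succ]

/-- If the maximum comes second, `132`-avoidance forces the first entry above all later ones. -/
theorem exists_prependTwo_eq {π : Fin (m + 2) → Fin (m + 2)} (hπ : Bijective π)
    (h132 : Avoids π ![1,3,2]) (h1 : π 1 = Fin.last (m + 1)) :
    ∃ σ, Bijective σ ∧ prependTwo σ = π := by
  obtain ⟨τ, hτ, rfl⟩ := exists_insertMax_eq hπ h1
  have hτ0 : τ 0 = Fin.last m := by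
    refine eq_last_of_forall_lt hτ.2 fun j hj => ?_
    obtain ⟨j, rfl⟩ := Fin.exists_succ_eq.2 hj
    refine (lt_or_gt_of_ne (hτ.1.ne hj)).resolve_right fun hlt => h132 ?_
    refine contains_132_iff.2 ⟨0, 1, j.succ.succ, ?_, ?_, ?_, ?_⟩ <;>
      simp [hlt, Fin.castSucc_lt_last, Fin.one_lt_succ_succ]
  obtain ⟨σ, hσ, rfl⟩ := exists_insertMax_eq hτ hτ0
  exact ⟨σ, hσ, rfl⟩

end PrependTwo

section Fibers

variable {m : ℕ}

theorem image_prependTwo_Av_pats132_2341_3241_45123 :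
    prependTwo '' Av pats123_132_3241 m =
      {π ∈ Av pats132_2341_3241_45123 (m + 2) | π 1 = Fin.last (m + 1)} := by
  ext π
  simp only [Set.mem_image, Set.mem_ofPred_eq, mem_Av_pats123_132_3241,
    mem_Av_pats132_2341_3241_45123]
  constructor
  · rintro ⟨σ, ⟨hσ, h123, h132, h3241⟩, rfl⟩
    exact ⟨⟨bijective_prependTwo hσ, h132.prependTwo_132, h123.prependTwo_2341,
      h3241.prependTwo_of_le (by decide), avoids_45123_prependTwo_iff.2 h123⟩,
      prependTwo_apply_one⟩
  · rintro ⟨⟨hπ, h132, -, h3241, h45123⟩, h1⟩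
    obtain ⟨σ, hσ, rfl⟩ := exists_prependTwo_eq hπ h132 h1
    exact ⟨σ, ⟨hσ, avoids_45123_prependTwo_iff.1 h45123, h132.of_prependTwo,
      h3241.of_prependTwo⟩, rfl⟩

theorem image_prependTwo_Av_pats123_132_3241 :
    prependTwo '' Av pats123_132_3241 m =
      {π ∈ Av pats123_132_3241 (m + 2) | π 1 = Fin.last (m + 1)} := by
  ext π
  simp only [Set.mem_image, Set.mem_ofPred_eq, mem_Av_pats123_132_3241]
  constructor
  · rintro ⟨σ, ⟨hσ, h123, h132, h3241⟩, rfl⟩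
    exact ⟨⟨bijective_prependTwo hσ, h123.prependTwo_of_le (by decide), h132.prependTwo_132,
      h3241.prependTwo_of_le (by decide)⟩, prependTwo_apply_one⟩
  · rintro ⟨⟨hπ, h123, h132, h3241⟩, h1⟩
    obtain ⟨σ, hσ, rfl⟩ := exists_prependTwo_eq hπ h132 h1
    exact ⟨σ, ⟨hσ, h123.of_prependTwo, h132.of_prependTwo, h3241.of_prependTwo⟩, rfl⟩

theorem sep_Av_pats123_132_3241_last :
    {π ∈ Av pats123_132_3241 (m + 1) | π (Fin.last m) = Fin.last m} =
      {insertMax (Fin.last m) Fin.rev} := by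
  ext π
  simp only [Set.mem_ofPred_eq, Set.mem_singleton_iff, mem_Av_pats123_132_3241]
  constructor
  · rintro ⟨⟨hπ, h123, -, -⟩, hl⟩
    obtain ⟨σ, hσ, rfl⟩ := exists_insertMax_eq hπ hl
    rw [eq_rev_of_antitone hσ (avoids_123_insertMax_last_iff.1 h123)]
  · rintro rfl
    have hasc : ∀ {k} {p : Fin k → ℕ}, (∃ a b, a < b ∧ p a < p b) →
        Avoids (Fin.rev (n := m)) p :=
      avoids_of_antitone Fin.rev_anti
    exact ⟨⟨bijective_insertMax Fin.rev_bijective _,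
      avoids_123_insertMax_last_iff.2 Fin.rev_anti,
      (hasc ⟨0, 2, by decide, by decide⟩).insertMax_last (by decide),
      (hasc ⟨0, 2, by decide, by decide⟩).insertMax_last (by decide)⟩, insertMax_apply_same⟩

end Fibers

theorem max_mem_or_exists_interior {n : ℕ} {π : Fin (n + 3) → Fin (n + 3)} (hπ : Bijective π) :
    π 0 = Fin.last _ ∨ π 1 = Fin.last _ ∨ π (Fin.last _) = Fin.last _ ∨
      ∃ i, 1 < i ∧ i < Fin.last _ ∧ ∀ j ≠ i, π j < π i := by
  obtain ⟨i, hi⟩ := hπ.2 (Fin.last _)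
  by_cases h0 : i = 0
  · exact .inl (h0 ▸ hi)
  by_cases h1 : i = 1
  · exact .inr (.inl (h1 ▸ hi))
  by_cases hl : i = Fin.last _
  · exact .inr (.inr (.inl (hl ▸ hi)))
  refine .inr (.inr (.inr ⟨i, ?_, Fin.lt_last_iff_ne_last.2 hl, fun j hj => ?_⟩))
  · simp only [Fin.ext_iff, Fin.val_zero, Fin.val_one] at h0 h1
    rw [Fin.lt_def, Fin.val_one]
    omega
  · rw [hi, Fin.lt_last_iff_ne_last, ← hi]
    exact hπ.1.ne hj

theorem max_mem_of_mem_Av_pats132_2341_3241_45123 {n : ℕ} {π : Fin (n + 3) → Fin (n + 3)}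
    (hπ : π ∈ Av pats132_2341_3241_45123 (n + 3)) :
    π 0 = Fin.last _ ∨ π 1 = Fin.last _ ∨ π (Fin.last _) = Fin.last _ := by
  obtain ⟨hbij, h132, h2341, h3241, -⟩ := mem_Av_pats132_2341_3241_45123.1 hπ
  rcases max_mem_or_exists_interior hbij with h | h | h | ⟨i, h1i, hil, hmax⟩
  · exact .inl h
  · exact .inr (.inl h)
  · exact .inr (.inr h)
  exfalso
  have h01 : (0 : Fin (n + 3)) < 1 := Fin.zero_lt_one
  rcases lt_or_gt_of_ne (hbij.1.ne (h01.trans (h1i.trans hil)).ne) with h0l | h0l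
  · exact h132 (contains_132_iff.2 ⟨0, i, _, h01.trans h1i, hil, h0l, hmax _ hil.ne'⟩)
  rcases lt_or_gt_of_ne (hbij.1.ne (h1i.trans hil).ne) with h1l | h1l
  · exact h132 (contains_132_iff.2 ⟨1, i, _, h1i, hil, h1l, hmax _ hil.ne'⟩)
  rcases lt_or_gt_of_ne (hbij.1.ne h01.ne) with h0l1 | h0l1
  · exact h2341 (contains_2341_iff.2 ⟨0, 1, i, _, h01, h1i, hil, h0l, h0l1, hmax _ h1i.ne⟩)
  · exact h3241 (contains_3241_iff.2 ⟨0, 1, i, _, h01, h1i, hil, h1l, h0l1,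
      hmax _ (h01.trans h1i).ne⟩)

theorem max_mem_of_mem_Av_pats123_132_3241 {n : ℕ} {π : Fin (n + 3) → Fin (n + 3)}
    (hπ : π ∈ Av pats123_132_3241 (n + 3)) :
    π 0 = Fin.last _ ∨ π 1 = Fin.last _ ∨ π (Fin.last _) = Fin.last _ := by
  obtain ⟨hbij, h123, h132, h3241⟩ := mem_Av_pats123_132_3241.1 hπ
  rcases max_mem_or_exists_interior hbij with h | h | h | ⟨i, h1i, hil, hmax⟩
  · exact .inl h
  · exact .inr (.inl h)
  · exact .inr (.inr h)
  exfalso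
  have h01 : (0 : Fin (n + 3)) < 1 := Fin.zero_lt_one
  rcases lt_or_gt_of_ne (hbij.1.ne h01.ne) with h0l1 | h0l1
  · exact h123 (contains_123_iff.2 ⟨0, 1, i, h01, h1i, h0l1, hmax _ h1i.ne⟩)
  rcases lt_or_gt_of_ne (hbij.1.ne (h1i.trans hil).ne) with h1l | h1l
  · exact h132 (contains_132_iff.2 ⟨1, i, _, h1i, hil, h1l, hmax _ hil.ne'⟩)
  · exact h3241 (contains_3241_iff.2 ⟨0, 1, i, _, h01, h1i, hil, h1l, h0l1,
      hmax _ (h01.trans h1i).ne⟩)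

theorem ncard_eq_add_of_max_mem {n : ℕ} {A : Set (Fin (n + 3) → Fin (n + 3))}
    (hinj : ∀ π ∈ A, Injective π)
    (hmax : ∀ π ∈ A, π 0 = Fin.last _ ∨ π 1 = Fin.last _ ∨ π (Fin.last _) = Fin.last _) :
    A.ncard = {π ∈ A | π 0 = Fin.last _}.ncard + {π ∈ A | π 1 = Fin.last _}.ncard +
      {π ∈ A | π (Fin.last _) = Fin.last _}.ncard := by
  have hdisj : ∀ a b : Fin (n + 3), a ≠ b →
      Disjoint {π ∈ A | π a = Fin.last _} {π ∈ A | π b = Fin.last _} :=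
    fun a b hab => Set.disjoint_left.2 fun π ⟨hπ, ha⟩ ⟨_, hb⟩ => hab (hinj π hπ (ha.trans hb.symm))
  have hA : A = {π ∈ A | π 0 = Fin.last _} ∪ {π ∈ A | π 1 = Fin.last _} ∪
      {π ∈ A | π (Fin.last _) = Fin.last _} := by
    ext π
    constructor
    · intro hπ
      rcases hmax π hπ with h | h | h <;> simp [hπ, h]
    · rintro ((⟨hπ, -⟩ | ⟨hπ, -⟩) | ⟨hπ, -⟩) <;> exact hπ
  have h01 : (0 : Fin (n + 3)) ≠ 1 := Fin.zero_ne_one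
  have h0l : (0 : Fin (n + 3)) ≠ Fin.last _ := (Fin.last_pos).ne
  have h1l : (1 : Fin (n + 3)) ≠ Fin.last _ := by simp [Fin.ext_iff]
  rw [congrArg Set.ncard hA, Set.ncard_union_eq (Set.disjoint_union_left.2
      ⟨hdisj _ _ h0l, hdisj _ _ h1l⟩), Set.ncard_union_eq (hdisj _ _ h01)]

theorem ncard_Av_pats132_2341_3241_45123 (n : ℕ) :
    (Av pats132_2341_3241_45123 (n + 3)).ncard =
      2 * (Av pats132_2341_3241_45123 (n + 2)).ncard + (Av pats123_132_3241 (n + 1)).ncard := by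
  rw [ncard_eq_add_of_max_mem (fun π hπ => hπ.1.1)
      (fun π hπ => max_mem_of_mem_Av_pats132_2341_3241_45123 hπ),
    ← image_insertMax_zero_Av (by decide), ← image_prependTwo_Av_pats132_2341_3241_45123,
    ← image_insertMax_last_Av (by decide), Set.ncard_image_of_injective _ (insertMax_injective _),
    Set.ncard_image_of_injective _ prependTwo_injective,
    Set.ncard_image_of_injective _ (insertMax_injective _)]
  ring

theorem ncard_Av_pats123_132_3241 (n : ℕ) :
    (Av pats123_132_3241 (n + 3)).ncard =
      (Av pats123_132_3241 (n + 2)).ncard + (Av pats123_132_3241 (n + 1)).ncard + 1 := by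
  rw [ncard_eq_add_of_max_mem (fun π hπ => hπ.1.1)
      (fun π hπ => max_mem_of_mem_Av_pats123_132_3241 hπ),
    ← image_insertMax_zero_Av (by decide), ← image_prependTwo_Av_pats123_132_3241,
    sep_Av_pats123_132_3241_last, Set.ncard_image_of_injective _ (insertMax_injective _),
    Set.ncard_image_of_injective _ prependTwo_injective, Set.ncard_singleton]

theorem ncard_Av_of_lt {n : ℕ} {P : List Pattern} (hP : ∀ p ∈ P, n < p.1) :
    (Av P n).ncard = n ! := by
  have : Av P n = {π | Bijective π} :=
    Set.ext fun π => ⟨fun h => h.1, fun h => ⟨h, fun p hp => avoids_of_lt (hP p hp)⟩⟩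
  rw [this, ← Nat.card_coe_set_eq, Set.coe_ofPred, Nat.card_congr Equiv.bijectiveEquiv,
    Nat.card_perm, Nat.card_fin]

theorem ncard_Av_pats123_132_3241_add_one (m : ℕ) :
    (Av pats123_132_3241 (m + 1)).ncard + 1 = fib (m + 3) := by
  induction m using Nat.twoStepInduction with
  | zero => rw [ncard_Av_of_lt (by decide)]; rfl
  | one => rw [ncard_Av_of_lt (by decide)]; rfl
  | more m ih₁ ih₂ =>
    have ih₂ : (Av pats123_132_3241 (m + 2)).ncard + 1 = fib (m + 4) := ih₂
    have hfib : fib (m + 5) = fib (m + 3) + fib (m + 4) := fib_add_two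
    show (Av pats123_132_3241 (m + 3)).ncard + 1 = fib (m + 5)
    rw [ncard_Av_pats123_132_3241]
    omega

theorem ncard_Av_pats132_2341_3241_45123_add_fib (n : ℕ) :
    (Av pats132_2341_3241_45123 (n + 1)).ncard + fib (n + 4) = 3 * 2 ^ n + 1 := by
  induction n using Nat.twoStepInduction with
  | zero => rw [ncard_Av_of_lt (by decide)]; rfl
  | one => rw [ncard_Av_of_lt (by decide)]; rfl
  | more n _ ih =>
    have ht := ncard_Av_pats123_132_3241_add_one n
    have hfib₁ : fib (n + 5) = fib (n + 3) + fib (n + 4) := fib_add_two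
    have hfib₂ : fib (n + 6) = fib (n + 4) + fib (n + 5) := fib_add_two
    have ih : (Av pats132_2341_3241_45123 (n + 2)).ncard + fib (n + 5) = 3 * 2 ^ (n + 1) + 1 :=
      ih
    show (Av pats132_2341_3241_45123 (n + 3)).ncard + fib (n + 6) = 3 * 2 ^ (n + 2) + 1
    rw [ncard_Av_pats132_2341_3241_45123, pow_succ 2 (n + 1)]
    omega

theorem stmt_11 (n : ℕ) (hn : 1 ≤ n) :
    (Nat.card ↥{π ∈ TSS132 n | Avoids π ![4,5,1,2,3]} : ℤ) =
      3 * 2^(n-1) - Nat.fib (n+3) + 1 := by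
  obtain ⟨n, rfl⟩ := Nat.exists_eq_add_of_le' hn
  have h : ((Av pats132_2341_3241_45123 (n + 1)).ncard : ℤ) + fib (n + 4) = 3 * 2 ^ n + 1 := by
    exact_mod_cast ncard_Av_pats132_2341_3241_45123_add_fib n
  rw [Nat.card_coe_set_eq, sep_TSS132_eq_Av, Nat.add_sub_cancel]
  linear_combination h
end
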